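/- arXiv:1008.3667 — 3 statements merged into one kernel-verified Lean document; each statement's English description precedes it below -/
import Mathlib

section
/- Every p ∈ 𝒫⁺ has an inverse under ⊕: define (−p) by (−p)(ε) = 1 and (−p)(xτ)/(−p)(x) = p(xτ)^{-1} / ∑_{α∈Σ} p(xα)^{-1}. Then −p ∈ 𝒫⁺ and p ⊕ (−p) = i∘, where i∘(x) = (1/|Σ|)^{|x|}. Consequently (𝒫⁺, ⊕) is an abelian group with identity i∘. -/
/-- Auxiliary builder: construct a string measure from conditional ratios. -/
def buildAux {A : Type*} (r : List A → A → ℝ) : List A → List A → ℝ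
  | _, [] => 1
  | pre, τ :: rest => r pre τ * buildAux r (pre ++ [τ]) rest

/-- `build r x` is the product of the conditional ratios `r` along the prefixes of `x`. -/
def build {A : Type*} (r : List A → A → ℝ) : List A → ℝ := buildAux r []

/-- A restricted probability measure: strictly positive cylinder probabilities in (0,1],
with value 1 on the empty string and consistent one-symbol extensions. -/
def IsMeasPlus {A : Type*} [Fintype A] (p : List A → ℝ) : Prop :=
  p [] = 1 ∧ (∀ x, 0 < p x ∧ p x ≤ 1) ∧ ∀ x, (∑ τ : A, p (x ++ [τ])) = p x

/-- The abelian sum `p₁ ⊕ p₂`, defined by `(p₁⊕p₂)(ε) = 1` and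
`(p₁⊕p₂)(xτ)/(p₁⊕p₂)(x) = p₁(xτ)p₂(xτ)/∑_α p₁(xα)p₂(xα)`. -/
noncomputable def oplus {A : Type*} [Fintype A] (p₁ p₂ : List A → ℝ) : List A → ℝ :=
  build (fun x τ => p₁ (x ++ [τ]) * p₂ (x ++ [τ]) / ∑ α : A, p₁ (x ++ [α]) * p₂ (x ++ [α]))

/-- Symbolic white noise: `i∘(x) = (1/|Σ|)^{|x|}`. -/
noncomputable def whiteNoise (A : Type*) [Fintype A] : List A → ℝ :=
  fun x => (1 / (Fintype.card A : ℝ)) ^ x.length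

/-- The ⊕-inverse `−p`, defined by `(−p)(ε) = 1` and
`(−p)(xτ)/(−p)(x) = p(xτ)⁻¹/∑_α p(xα)⁻¹`. -/
noncomputable def oneg {A : Type*} [Fintype A] (p : List A → ℝ) : List A → ℝ :=
  build (fun x τ => (p (x ++ [τ]))⁻¹ / ∑ α : A, (p (x ++ [α]))⁻¹)

section Aux

variable {A : Type*}

lemma buildAux_snoc (r : List A → A → ℝ) (pre x : List A) (τ : A) :
    buildAux r pre (x ++ [τ]) = buildAux r pre x * r (pre ++ x) τ := by
  induction x generalizing pre with
  | nil => simp [buildAux]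
  | cons a x ih => simp [buildAux, ih, mul_assoc]

lemma build_nil (r : List A → A → ℝ) : build r [] = 1 := rfl

lemma build_snoc (r : List A → A → ℝ) (x : List A) (τ : A) :
    build r (x ++ [τ]) = build r x * r x τ := by
  simpa [build] using buildAux_snoc r [] x τ

lemma build_congr {r₁ r₂ : List A → A → ℝ} (h : ∀ x τ, r₁ x τ = r₂ x τ) :
    build r₁ = build r₂ := by
  funext x
  induction x using List.reverseRecOn with
  | nil => rfl
  | append_singleton x τ ih => simp [build_snoc, ih, h]

variable [Fintype A] [Nonempty A]

lemma norm_pos {g : A → ℝ} (hg : ∀ τ, 0 < g τ) (τ : A) :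
    0 < g τ / ∑ α : A, g α :=
  div_pos (hg τ) (Finset.sum_pos (fun a _ => hg a) Finset.univ_nonempty)

lemma norm_sum {g : A → ℝ} (hg : ∀ τ, 0 < g τ) :
    (∑ τ : A, g τ / ∑ α : A, g α) = 1 := by
  rw [← Finset.sum_div]
  exact div_self (Finset.sum_pos (fun a _ => hg a) Finset.univ_nonempty).ne'

lemma norm_cancel {c : ℝ} (hc : c ≠ 0) (g : A → ℝ) (τ : A) :
    (c * g τ) / ∑ α : A, c * g α = g τ / ∑ α : A, g α := by
  rw [← Finset.mul_sum, mul_div_mul_left _ _ hc]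

lemma isMeasPlus_build {r : List A → A → ℝ}
    (hpos : ∀ x τ, 0 < r x τ) (hsum : ∀ x, (∑ τ : A, r x τ) = 1) :
    IsMeasPlus (build r) := by
  have hb : ∀ x, 0 < build r x := by
    intro x
    induction x using List.reverseRecOn with
    | nil => norm_num [build_nil]
    | append_singleton x τ ih => simpa [build_snoc] using mul_pos ih (hpos x τ)
  have hb1 : ∀ x, build r x ≤ 1 := by
    intro x
    induction x using List.reverseRecOn with
    | nil => simp [build_nil]
    | append_singleton x τ ih =>
        rw [build_snoc]
        have hr1 : r x τ ≤ 1 := by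
          rw [← hsum x]
          exact Finset.single_le_sum (fun a _ => (hpos x a).le) (Finset.mem_univ τ)
        nlinarith [hb x, hpos x τ]
  exact ⟨rfl, fun x => ⟨hb x, hb1 x⟩, fun x => by
    simp only [build_snoc, ← Finset.mul_sum, hsum x, mul_one]⟩

lemma build_ratio_self {p : List A → ℝ} (hp : IsMeasPlus p) :
    build (fun x τ => p (x ++ [τ]) / p x) = p := by
  obtain ⟨h1, hpos, _⟩ := hp
  funext x
  induction x using List.reverseRecOn with
  | nil => simp [build_nil, h1]
  | append_singleton x τ ih =>
      rw [build_snoc, ih, mul_div_cancel₀]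
      exact (hpos x).1.ne'

lemma build_const (c : ℝ) : build (fun (_ : List A) (_ : A) => c) = fun x => c ^ x.length := by
  funext x
  induction x using List.reverseRecOn with
  | nil => simp [build_nil]
  | append_singleton x τ ih => simp [build_snoc, ih, pow_succ]

lemma whiteNoise_eq : whiteNoise A = build (fun (_ : List A) (_ : A) => 1 / (Fintype.card A : ℝ)) := by
  rw [build_const]; rfl

lemma oplus_snoc (p q : List A → ℝ) (x : List A) (τ : A) :
    oplus p q (x ++ [τ]) =
      oplus p q x * (p (x ++ [τ]) * q (x ++ [τ]) / ∑ α : A, p (x ++ [α]) * q (x ++ [α])) :=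
  build_snoc _ x τ

lemma oneg_snoc (p : List A → ℝ) (x : List A) (τ : A) :
    oneg p (x ++ [τ]) = oneg p x * ((p (x ++ [τ]))⁻¹ / ∑ α : A, (p (x ++ [α]))⁻¹) :=
  build_snoc _ x τ

lemma isMeasPlus_oplus {p q : List A → ℝ} (hp : IsMeasPlus p) (hq : IsMeasPlus q) :
    IsMeasPlus (oplus p q) :=
  isMeasPlus_build
    (fun x τ => norm_pos (g := fun α => p (x ++ [α]) * q (x ++ [α]))
      (fun α => mul_pos (hp.2.1 _).1 (hq.2.1 _).1) τ)
    (fun x => norm_sum (g := fun α => p (x ++ [α]) * q (x ++ [α]))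
      (fun α => mul_pos (hp.2.1 _).1 (hq.2.1 _).1))

end Aux

/-- every `p ∈ 𝒫⁺` has the ⊕-inverse `−p`, with `p ⊕ (−p) = i∘`;
consequently `(𝒫⁺, ⊕)` is an abelian group with identity `i∘`. -/
theorem oplus_abelianGroup {A : Type*} [Fintype A] [Nonempty A] :
    (∀ p : List A → ℝ, IsMeasPlus p →
      IsMeasPlus (oneg p) ∧ oplus p (oneg p) = whiteNoise A) ∧
    IsMeasPlus (whiteNoise A) ∧
    (∀ p : List A → ℝ, IsMeasPlus p → oplus p (whiteNoise A) = p) ∧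
    (∀ p₁ p₂ : List A → ℝ, IsMeasPlus p₁ → IsMeasPlus p₂ →
      IsMeasPlus (oplus p₁ p₂) ∧ oplus p₁ p₂ = oplus p₂ p₁) ∧
    (∀ p₁ p₂ p₃ : List A → ℝ, IsMeasPlus p₁ → IsMeasPlus p₂ → IsMeasPlus p₃ →
      oplus (oplus p₁ p₂) p₃ = oplus p₁ (oplus p₂ p₃)) := by
  have cardpos : (0 : ℝ) < (Fintype.card A : ℝ) := by
    exact_mod_cast Fintype.card_pos
  refine ⟨?_, ?_, ?_, ?_, ?_⟩
  · -- inverse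
    intro p hp
    have hppos : ∀ x, 0 < p x := fun x => (hp.2.1 x).1
    constructor
    · exact isMeasPlus_build
        (fun x τ => norm_pos (g := fun α => (p (x ++ [α]))⁻¹)
          (fun α => inv_pos.mpr (hppos _)) τ)
        (fun x => norm_sum (g := fun α => (p (x ++ [α]))⁻¹)
          (fun α => inv_pos.mpr (hppos _)))
    · rw [whiteNoise_eq]
      apply build_congr
      intro x τ
      set S : ℝ := ∑ α : A, (p (x ++ [α]))⁻¹ with hS
      have hSpos : 0 < S := Finset.sum_pos (fun a _ => inv_pos.mpr (hppos _)) Finset.univ_nonempty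
      have hnegpos : 0 < oneg p x := by
        have := (isMeasPlus_build
          (fun x τ => norm_pos (g := fun α => (p (x ++ [α]))⁻¹)
            (fun α => inv_pos.mpr (hppos _)) τ)
          (fun x => norm_sum (g := fun α => (p (x ++ [α]))⁻¹)
            (fun α => inv_pos.mpr (hppos _))) :
          IsMeasPlus (oneg p)).2.1 x
        exact this.1
      have key : ∀ α : A, p (x ++ [α]) * oneg p (x ++ [α]) = oneg p x / S := by
        intro α
        have hne : p (x ++ [α]) ≠ 0 := (hppos _).ne'
        rw [oneg_snoc, ← hS]
        field_simp
      simp only [key]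
      rw [Finset.sum_const, Finset.card_univ, nsmul_eq_mul]
      have h0 : oneg p x / S ≠ 0 := (div_pos hnegpos hSpos).ne'
      field_simp
  · -- whiteNoise is measPlus
    rw [whiteNoise_eq]
    exact isMeasPlus_build
      (fun x τ => by positivity)
      (fun x => by
        rw [Finset.sum_const, Finset.card_univ, nsmul_eq_mul]
        field_simp)
  · -- identity
    intro p hp
    have hppos : ∀ x, 0 < p x := fun x => (hp.2.1 x).1
    have : oplus p (whiteNoise A) = build (fun x τ => p (x ++ [τ]) / p x) := by
      apply build_congr
      intro x τ
      have hwn : ∀ α : A, whiteNoise A (x ++ [α]) = (1 / (Fintype.card A : ℝ)) ^ (x.length + 1) := by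
        intro α; simp [whiteNoise]
      have hc : ((1 : ℝ) / (Fintype.card A : ℝ)) ^ (x.length + 1) ≠ 0 := by positivity
      simp only [hwn]
      have : ∀ α : A, p (x ++ [α]) * (1 / (Fintype.card A : ℝ)) ^ (x.length + 1)
          = (1 / (Fintype.card A : ℝ)) ^ (x.length + 1) * p (x ++ [α]) := fun α => mul_comm _ _
      simp only [this]
      rw [norm_cancel hc (fun α => p (x ++ [α])) τ, hp.2.2 x]
    rw [this, build_ratio_self hp]
  · -- comm
    intro p₁ p₂ h1 h2
    refine ⟨isMeasPlus_oplus h1 h2, ?_⟩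
    apply build_congr
    intro x τ
    simp only [mul_comm (p₁ _) (p₂ _)]
  · -- assoc
    intro p₁ p₂ p₃ h1 h2 h3
    have t := fun (x : List A) (τ : A) =>
      p₁ (x ++ [τ]) * p₂ (x ++ [τ]) * p₃ (x ++ [τ]) /
        ∑ α : A, p₁ (x ++ [α]) * p₂ (x ++ [α]) * p₃ (x ++ [α])
    have hq := isMeasPlus_oplus h1 h2
    have hw := isMeasPlus_oplus h2 h3
    have hL : oplus (oplus p₁ p₂) p₃ = build (fun x τ =>
        p₁ (x ++ [τ]) * p₂ (x ++ [τ]) * p₃ (x ++ [τ]) /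
          ∑ α : A, p₁ (x ++ [α]) * p₂ (x ++ [α]) * p₃ (x ++ [α])) := by
      apply build_congr
      intro x τ
      set D : ℝ := ∑ α : A, p₁ (x ++ [α]) * p₂ (x ++ [α]) with hD
      have hDpos : 0 < D :=
        Finset.sum_pos (fun a _ => mul_pos (h1.2.1 _).1 (h2.2.1 _).1) Finset.univ_nonempty
      have hqpos : 0 < oplus p₁ p₂ x := (hq.2.1 x).1
      have hc : oplus p₁ p₂ x / D ≠ 0 := (div_pos hqpos hDpos).ne'
      have key : ∀ α : A, oplus p₁ p₂ (x ++ [α]) * p₃ (x ++ [α]) =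
          (oplus p₁ p₂ x / D) * (p₁ (x ++ [α]) * p₂ (x ++ [α]) * p₃ (x ++ [α])) := by
        intro α
        rw [oplus_snoc]
        rw [← hD]
        ring
      simp only [key]
      rw [norm_cancel hc (fun α => p₁ (x ++ [α]) * p₂ (x ++ [α]) * p₃ (x ++ [α])) τ]
    have hR : oplus p₁ (oplus p₂ p₃) = build (fun x τ =>
        p₁ (x ++ [τ]) * p₂ (x ++ [τ]) * p₃ (x ++ [τ]) /
          ∑ α : A, p₁ (x ++ [α]) * p₂ (x ++ [α]) * p₃ (x ++ [α])) := by
      apply build_congr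
      intro x τ
      set E : ℝ := ∑ α : A, p₂ (x ++ [α]) * p₃ (x ++ [α]) with hE
      have hEpos : 0 < E :=
        Finset.sum_pos (fun a _ => mul_pos (h2.2.1 _).1 (h3.2.1 _).1) Finset.univ_nonempty
      have hwpos : 0 < oplus p₂ p₃ x := (hw.2.1 x).1
      have hc : oplus p₂ p₃ x / E ≠ 0 := (div_pos hwpos hEpos).ne'
      have key : ∀ α : A, p₁ (x ++ [α]) * oplus p₂ p₃ (x ++ [α]) =
          (oplus p₂ p₃ x / E) * (p₁ (x ++ [α]) * p₂ (x ++ [α]) * p₃ (x ++ [α])) := by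
        intro α
        rw [oplus_snoc]
        rw [← hE]
        ring
      simp only [key]
      rw [norm_cancel hc (fun α => p₁ (x ++ [α]) * p₂ (x ++ [α]) * p₃ (x ++ [α])) τ]
    rw [hL, hR]
end

section
/- If G is a PFSA with strictly positive morph function Π̃, then the PFSA −G with the same structure and morph function Π̃'(q,σ) = Π̃(q,σ)^{-1} / ∑_{α∈Σ} Π̃(q,α)^{-1} satisfies: the measure H(G) ⊕ H(−G) equals symbolic white noise i∘, i.e., for all strings x, (H(G)⊕H(−G))(x) = (1/|Σ|)^{|x|}. -/
/-- A PFSA over state set `Q` and alphabet `A`: transition map, start state, morph function. -/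
structure PFSA (Q A : Type*) where
  δ : Q → A → Q
  q0 : Q
  π : Q → A → ℝ

/-- Validity: the morph function is strictly positive and each row sums to 1. -/
def PFSA.Valid {Q A : Type*} [Fintype A] (G : PFSA Q A) : Prop :=
  (∀ q σ, 0 < G.π q σ) ∧ ∀ q, (∑ σ : A, G.π q σ) = 1

/-- The probability of generating string `x` starting from state `q`. -/
def HmeasAux {Q A : Type*} (G : PFSA Q A) : Q → List A → ℝ
  | _, [] => 1
  | q, σ :: rest => G.π q σ * HmeasAux G (G.δ q σ) rest

/-- The string-probability measure `H(G)` induced by the PFSA `G`: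
`p(σ₁⋯σ_r) = ∏_k Π̃(δ*(q₀,σ₁⋯σ_k), σ_{k+1})`. -/
def Hmeas {Q A : Type*} (G : PFSA Q A) : List A → ℝ := HmeasAux G G.q0


lemma hmeasAux_append {Q A : Type*} (G : PFSA Q A) (q : Q) (x : List A) (τ : A) :
    HmeasAux G q (x ++ [τ]) = HmeasAux G q x * G.π (x.foldl G.δ q) τ := by
  induction x generalizing q with
  | nil => simp [HmeasAux]
  | cons a t ih => simp [HmeasAux, ih, mul_assoc]

lemma hmeasAux_pos {Q A : Type*} (G : PFSA Q A) (h : ∀ q σ, 0 < G.π q σ)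
    (q : Q) (x : List A) : 0 < HmeasAux G q x := by
  induction x generalizing q with
  | nil => simp [HmeasAux]
  | cons a t ih => exact mul_pos (h q a) (ih _)

lemma buildAux_const {A : Type*} (r : List A → A → ℝ) (c : ℝ)
    (h : ∀ pre τ, r pre τ = c) :
    ∀ x pre, buildAux r pre x = c ^ x.length := by
  intro x
  induction x with
  | nil => intro pre; simp [buildAux]
  | cons a t ih => intro pre; simp [buildAux, h, ih, pow_succ, mul_comm]

/-- the PFSA `−G` with the same structure and morph function
`Π̃'(q,σ) = Π̃(q,σ)⁻¹/∑_α Π̃(q,α)⁻¹` satisfies `H(G) ⊕ H(−G) = i∘`. -/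
theorem pfsa_inverse_whiteNoise {Q A : Type*} [Fintype A] [Nonempty A]
    (G : PFSA Q A) (hG : G.Valid) :
    ∀ x : List A,
      oplus (Hmeas G)
        (Hmeas (PFSA.mk G.δ G.q0 (fun q σ => (G.π q σ)⁻¹ / ∑ α : A, (G.π q α)⁻¹))) x =
      (1 / (Fintype.card A : ℝ)) ^ x.length := by
  intro x
  obtain ⟨hpos, hsum⟩ := hG
  set G' : PFSA Q A := PFSA.mk G.δ G.q0 (fun q σ => (G.π q σ)⁻¹ / ∑ α : A, (G.π q α)⁻¹)
  have hS : ∀ q : Q, 0 < ∑ α : A, (G.π q α)⁻¹ := fun q =>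
    Finset.sum_pos (fun α _ => inv_pos.2 (hpos q α)) Finset.univ_nonempty
  have hpos' : ∀ q σ, 0 < G'.π q σ := fun q σ => div_pos (inv_pos.2 (hpos q σ)) (hS q)
  apply buildAux_const
  intro pre τ
  set q := pre.foldl G.δ G.q0 with hq
  have h1 : 0 < Hmeas G pre := hmeasAux_pos G hpos G.q0 pre
  have h2 : 0 < Hmeas G' pre := hmeasAux_pos G' hpos' G'.q0 pre
  have key : ∀ σ : A, Hmeas G (pre ++ [σ]) * Hmeas G' (pre ++ [σ])
      = Hmeas G pre * Hmeas G' pre * (∑ α : A, (G.π q α)⁻¹)⁻¹ := by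
    intro σ
    show HmeasAux G G.q0 (pre ++ [σ]) * HmeasAux G' G'.q0 (pre ++ [σ]) = _
    rw [hmeasAux_append, hmeasAux_append]
    have hd : G'.δ = G.δ := rfl
    have hq0 : G'.q0 = G.q0 := rfl
    rw [hd, hq0, ← hq]
    have hπ' : G'.π q σ = (G.π q σ)⁻¹ / ∑ α : A, (G.π q α)⁻¹ := rfl
    rw [hπ', div_eq_mul_inv]
    have hc : G.π q σ * (G.π q σ)⁻¹ = 1 := mul_inv_cancel₀ (hpos q σ).ne'
    calc HmeasAux G G.q0 pre * G.π q σ *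
          (HmeasAux G' G.q0 pre * ((G.π q σ)⁻¹ * (∑ α : A, (G.π q α)⁻¹)⁻¹))
        = HmeasAux G G.q0 pre * HmeasAux G' G.q0 pre *
            (∑ α : A, (G.π q α)⁻¹)⁻¹ * (G.π q σ * (G.π q σ)⁻¹) := by ring
      _ = _ := by rw [hc, mul_one]; rfl
  have hne : Hmeas G pre * Hmeas G' pre * (∑ α : A, (G.π q α)⁻¹)⁻¹ ≠ 0 := by
    have := hS q
    positivity
  simp only [key, Finset.sum_const, Finset.card_univ, nsmul_eq_mul]
  rw [mul_comm (↑(Fintype.card A) : ℝ), ← div_div, div_self hne]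
end

section
/- Suppose for each state q_i of a PFSA G, the identification constraint ℘_⋆·L_d·min_{σ∈Σ} Π̃(q_i,σ) ≥ L_w/|Σ| holds, where ℘_⋆ > 0 is the minimum stationary probability, and suppose G is not symbolic white noise (i.e., there exists a state q_i with ℋ_i > min_σ Π̃(q_i,σ)). Then |Q|·L_d > (L_w/(|Σ|·℘_⋆))·∑_{i=1}^{|Q|} ℋ_i^{-1}, and hence the coefficient β = L_w/(L_d·∑_i ℘_i ℋ_i) satisfies β < |Σ|·|Q|·℘_⋆ / [(∑_i ℘_i ℋ_i)(∑_j ℋ_j^{-1})]. -/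
/-- for a PFSA `G` with strictly positive morph matrix `π`, stationary
distribution `℘` with minimum entry `℘_⋆ > 0`, rowwise harmonic means
`ℋ_i = |Σ|/∑_α π(i,α)⁻¹`, if the identification constraint
`℘_⋆·L_d·min_σ π(i,σ) ≥ L_w/|Σ|` holds at every state, and `G` is not symbolic white
noise (some state has `ℋ_i > min_σ π(i,σ)`), then
`|Q|·L_d > (L_w/(|Σ|·℘_⋆))·∑_i ℋ_i⁻¹`, and hence
`β = L_w/(L_d·∑_i ℘_i ℋ_i) < |Σ|·|Q|·℘_⋆/[(∑_i ℘_i ℋ_i)(∑_j ℋ_j⁻¹)]`. -/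
theorem annihilation_advantage {Q A : Type*} [Fintype Q] [Fintype A] [Nonempty Q] [Nonempty A]
    (π : Q → A → ℝ) (hpos : ∀ i σ, 0 < π i σ) (hrow : ∀ i, ∑ σ : A, π i σ = 1)
    (Hm : Q → ℝ) (hHm : Hm = fun i => (Fintype.card A : ℝ) / ∑ α : A, (π i α)⁻¹)
    (p : Q → ℝ) (pstar : ℝ) (hstarpos : 0 < pstar) (hstar : ∀ i, pstar ≤ p i)
    (hpsum : ∑ i, p i = 1)
    (Ld Lw : ℝ) (hLd : 0 < Ld) (hLw : 0 < Lw)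
    (hident : ∀ (i : Q) (σ : A), Lw / (Fintype.card A : ℝ) ≤ pstar * Ld * π i σ)
    (hnotwhite : ∃ (i : Q) (σ : A), (∀ τ, π i σ ≤ π i τ) ∧ π i σ < Hm i) :
    (Lw / ((Fintype.card A : ℝ) * pstar)) * (∑ i, (Hm i)⁻¹) < (Fintype.card Q : ℝ) * Ld ∧
    Lw / (Ld * ∑ i, p i * Hm i) <
      (Fintype.card A : ℝ) * (Fintype.card Q : ℝ) * pstar /
        ((∑ i, p i * Hm i) * (∑ j, (Hm j)⁻¹)) := by
  classical
  set a : ℝ := (Fintype.card A : ℝ) with ha_def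
  have ha : (0:ℝ) < a := by exact Nat.cast_pos.mpr Fintype.card_pos
  have hsuminv : ∀ i, 0 < ∑ α : A, (π i α)⁻¹ := fun i =>
    Finset.sum_pos (fun α _ => inv_pos.mpr (hpos i α)) Finset.univ_nonempty
  have hHmpos : ∀ i, 0 < Hm i := by
    intro i; rw [hHm]; exact div_pos ha (hsuminv i)
  set c : ℝ := Lw / (a * pstar) with hc_def
  have hcpos : 0 < c := div_pos hLw (mul_pos ha hstarpos)
  -- per-symbol bound
  have hterm : ∀ i σ, c * (π i σ)⁻¹ ≤ Ld := by
    intro i σ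
    have hπ := hpos i σ
    have h1 : Lw / a ≤ pstar * Ld * π i σ := hident i σ
    have h2 : c ≤ Ld * π i σ := by
      rw [hc_def, div_le_iff₀ (mul_pos ha hstarpos)]
      have := (div_le_iff₀ ha).mp h1
      nlinarith
    rw [mul_inv_le_iff₀ hπ]
    linarith [h2]
  have hinvHm : ∀ i, (Hm i)⁻¹ = (∑ α : A, (π i α)⁻¹) / a := by
    intro i; rw [hHm]; simp [one_div]
  -- per-state bound
  have hstate : ∀ i, c * (Hm i)⁻¹ ≤ Ld := by
    intro i
    rw [hinvHm i]
    have hsum : ∑ α : A, c * (π i α)⁻¹ ≤ ∑ _α : A, Ld :=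
      Finset.sum_le_sum fun α _ => hterm i α
    rw [← Finset.mul_sum] at hsum
    simp only [Finset.sum_const, Finset.card_univ, nsmul_eq_mul] at hsum
    rw [mul_div_assoc'] at *
    rw [div_le_iff₀ ha]
    nlinarith
  obtain ⟨i₀, σ₀, hmin, hlt⟩ := hnotwhite
  have hstrict : c * (Hm i₀)⁻¹ < Ld := by
    have h1 : (Hm i₀)⁻¹ < (π i₀ σ₀)⁻¹ :=
      inv_strictAnti₀ (hpos i₀ σ₀) hlt
    calc c * (Hm i₀)⁻¹ < c * (π i₀ σ₀)⁻¹ := by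
          exact (mul_lt_mul_iff_right₀ hcpos).mpr h1
      _ ≤ Ld := hterm i₀ σ₀
  have hfirst : c * (∑ i, (Hm i)⁻¹) < (Fintype.card Q : ℝ) * Ld := by
    rw [Finset.mul_sum]
    calc ∑ i, c * (Hm i)⁻¹ < ∑ _i : Q, Ld :=
          Finset.sum_lt_sum (fun i _ => hstate i) ⟨i₀, Finset.mem_univ i₀, hstrict⟩
      _ = (Fintype.card Q : ℝ) * Ld := by
          simp [Finset.sum_const, Finset.card_univ, nsmul_eq_mul]
  refine ⟨hfirst, ?_⟩
  set S : ℝ := ∑ i, p i * Hm i with hS_def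
  set T : ℝ := ∑ j, (Hm j)⁻¹ with hT_def
  have hSpos : 0 < S :=
    Finset.sum_pos (fun i _ => mul_pos (lt_of_lt_of_le hstarpos (hstar i)) (hHmpos i))
      Finset.univ_nonempty
  have hTpos : 0 < T :=
    Finset.sum_pos (fun j _ => inv_pos.mpr (hHmpos j)) Finset.univ_nonempty
  have hLwT : Lw * T < (Fintype.card Q : ℝ) * Ld * (a * pstar) := by
    have : Lw * T / (a * pstar) < (Fintype.card Q : ℝ) * Ld := by
      rw [← div_mul_eq_mul_div, ← hc_def]; exact hfirst
    exact (div_lt_iff₀ (mul_pos ha hstarpos)).mp this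
  rw [div_lt_div_iff₀ (mul_pos hLd hSpos) (mul_pos hSpos hTpos)]
  nlinarith [mul_pos hSpos hTpos, hSpos, hLwT]
end
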